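/- Let c₀>0, α∈[0,1], β=√(1−α²), and let f:ℝ→ℂ be a solution of the profile ODE. Then (i) the quantity E(s) = (1/2)(e^{αs²/2}|f'(s)|² + (c₀²/4)|f(s)|²) is constant in s; call its value E₀. Moreover (ii) for all s∈ℝ: |f(s)| ≤ √(8E₀)/c₀, |f'(s)| ≤ √(2E₀)·e^{−αs²/4}, |z(s)| ≤ 8E₀/c₀², and |h(s)|+|y(s)| ≤ (8E₀/c₀)·e^{−αs²/4}, where z=|f|², y=Re(f̄·f'), h=Im(f̄·f'). -/

import Mathlib

open Real Filter MeasureTheory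

/-- The profile ODE `f'' + (s/2)(α+iβ) f' + (c₀²/4) e^{-αs²/2} f = 0`, with
`β = √(1-α²)`, encoded for a pair `(f, f')`. -/
def ProfileODE (c₀ α : ℝ) (f f' : ℝ → ℂ) : Prop :=
  ∀ s : ℝ,
    HasDerivAt f (f' s) s ∧
    HasDerivAt f'
      (-(((s : ℂ) / 2) * ((α : ℂ) + (Real.sqrt (1 - α ^ 2) : ℂ) * Complex.I) * f' s
        + ((c₀ ^ 2 / 4 : ℝ) : ℂ) * ((Real.exp (-α * s ^ 2 / 2) : ℝ) : ℂ) * f s)) s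

/-!
Multiply the ODE by `f̄'` and take real parts: the rotation term `iβ |f'|²` is purely imaginary,
the damping term `α (s/2) |f'|²` cancels the derivative of the weight `e^{αs²/2}`, and after
multiplying by that weight the potential term cancels the derivative of `(c₀²/4) |f|²`. Hence
`E(s) = ½ (e^{αs²/2} |f'|² + (c₀²/4) |f|²)` is constant. Each of its two nonnegative summands is
at most `2 E₀`, which bounds `f` and `f'`, and `|Re (f̄ f')|, |Im (f̄ f')| ≤ |f| |f'|`.
-/

open Complex ComplexConjugate

noncomputable def profileEnergy (c₀ α : ℝ) (f f' : ℝ → ℂ) (s : ℝ) : ℝ :=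
  (1 / 2) * (Real.exp (α * s ^ 2 / 2) * ‖f' s‖ ^ 2 + (c₀ ^ 2 / 4) * ‖f s‖ ^ 2)

lemma Complex.real_inner_mul_self (a w : ℂ) : inner ℝ w (a * w) = a.re * ‖w‖ ^ 2 := by
  rw [Complex.inner, mul_assoc, mul_conj', ← ofReal_pow, re_mul_ofReal]

lemma ProfileODE.hasDerivAt_profileEnergy {c₀ α : ℝ} {f f' : ℝ → ℂ}
    (h : ProfileODE c₀ α f f') (s : ℝ) : HasDerivAt (profileEnergy c₀ α f f') 0 s := by
  obtain ⟨hf, hf'⟩ := h s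
  have hweight : HasDerivAt (fun t : ℝ => Real.exp (α * t ^ 2 / 2))
      (Real.exp (α * s ^ 2 / 2) * (α * s)) s := by
    have := (((hasDerivAt_pow 2 s).const_mul α).div_const 2).exp
    convert this using 2; push_cast; ring
  have hE := ((hweight.mul hf'.norm_sq).add
    (hf.norm_sq.const_mul (c₀ ^ 2 / 4))).const_mul (1 / 2 : ℝ)
  refine hE.congr_deriv ?_
  have hwork : inner ℝ (f' s)
      (-(((s : ℂ) / 2) * ((α : ℂ) + (Real.sqrt (1 - α ^ 2) : ℂ) * Complex.I) * f' s
        + ((c₀ ^ 2 / 4 : ℝ) : ℂ) * ((Real.exp (-α * s ^ 2 / 2) : ℝ) : ℂ) * f s)) =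
      -(s / 2 * α * ‖f' s‖ ^ 2 + c₀ ^ 2 / 4 * Real.exp (-α * s ^ 2 / 2) * inner ℝ (f s) (f' s)) := by
    rw [inner_neg_right, inner_add_right, Complex.real_inner_mul_self, real_inner_comm (f' s),
      Complex.inner, Complex.inner, mul_assoc, ← ofReal_mul, re_ofReal_mul]
    have hre :
        ((s : ℂ) / 2 * ((α : ℂ) + (Real.sqrt (1 - α ^ 2) : ℂ) * Complex.I)).re = s / 2 * α := by
      simp
    rw [hre]
  have hexp : Real.exp (α * s ^ 2 / 2) * Real.exp (-α * s ^ 2 / 2) = 1 := by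
    rw [← Real.exp_add]; ring_nf; exact Real.exp_zero
  rw [hwork]
  linear_combination (-(c₀ ^ 2 / 4) * inner ℝ (f s) (f' s)) * hexp

lemma ProfileODE.profileEnergy_eq {c₀ α : ℝ} {f f' : ℝ → ℂ} (h : ProfileODE c₀ α f f')
    (s t : ℝ) : profileEnergy c₀ α f f' s = profileEnergy c₀ α f f' t :=
  is_const_of_deriv_eq_zero (fun r => (h.hasDerivAt_profileEnergy r).differentiableAt)
    (fun r => (h.hasDerivAt_profileEnergy r).deriv) s t

section PointwiseBounds

variable {c₀ α E s : ℝ} {f f' : ℝ → ℂ}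

lemma profileEnergy_nonneg : 0 ≤ profileEnergy c₀ α f f' s := by
  unfold profileEnergy; positivity

lemma sq_norm_le_of_profileEnergy_eq (hc₀ : 0 < c₀) (hE : profileEnergy c₀ α f f' s = E) :
    ‖f s‖ ^ 2 ≤ 8 * E / c₀ ^ 2 := by
  rw [le_div_iff₀ (by positivity)]
  unfold profileEnergy at hE
  nlinarith [Real.exp_pos (α * s ^ 2 / 2), sq_nonneg ‖f' s‖]

lemma norm_le_of_profileEnergy_eq (hc₀ : 0 < c₀) (hE : profileEnergy c₀ α f f' s = E) :
    ‖f s‖ ≤ Real.sqrt (8 * E) / c₀ := by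
  rw [le_div_iff₀ hc₀]
  refine Real.le_sqrt_of_sq_le ?_
  unfold profileEnergy at hE
  nlinarith [Real.exp_pos (α * s ^ 2 / 2)]

lemma norm_deriv_le_of_profileEnergy_eq (hE : profileEnergy c₀ α f f' s = E) :
    ‖f' s‖ ≤ Real.sqrt (2 * E) * Real.exp (-α * s ^ 2 / 4) := by
  rw [← div_le_iff₀ (Real.exp_pos _), div_eq_mul_inv, ← Real.exp_neg]
  refine Real.le_sqrt_of_sq_le ?_
  have hweight : Real.exp (-(-α * s ^ 2 / 4)) ^ 2 = Real.exp (α * s ^ 2 / 2) := by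
    rw [← Real.exp_nat_mul]; ring_nf
  unfold profileEnergy at hE
  nlinarith [sq_nonneg ‖f s‖]

lemma abs_im_add_abs_re_conj_mul_le_of_profileEnergy_eq (hc₀ : 0 < c₀)
    (hE : profileEnergy c₀ α f f' s = E) :
    |(conj (f s) * f' s).im| + |(conj (f s) * f' s).re|
      ≤ (8 * E / c₀) * Real.exp (-α * s ^ 2 / 4) := by
  have hE₀ : 0 ≤ E := hE ▸ profileEnergy_nonneg
  have hsqrt : Real.sqrt (8 * E) * Real.sqrt (2 * E) = 4 * E := by
    rw [← Real.sqrt_mul (by positivity), show 8 * E * (2 * E) = (4 * E) ^ 2 by ring,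
      Real.sqrt_sq (by positivity)]
  calc |(conj (f s) * f' s).im| + |(conj (f s) * f' s).re|
      ≤ 2 * (‖f s‖ * ‖f' s‖) := by
        rw [← Complex.norm_conj (f s), ← norm_mul]
        linarith [abs_im_le_norm (conj (f s) * f' s), abs_re_le_norm (conj (f s) * f' s)]
    _ ≤ 2 * (Real.sqrt (8 * E) / c₀ * (Real.sqrt (2 * E) * Real.exp (-α * s ^ 2 / 4))) := by
        gcongr
        exacts [norm_le_of_profileEnergy_eq hc₀ hE, norm_deriv_le_of_profileEnergy_eq hE]
    _ = Real.sqrt (8 * E) * Real.sqrt (2 * E) * (2 * Real.exp (-α * s ^ 2 / 4)) / c₀ := by ring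
    _ = (8 * E / c₀) * Real.exp (-α * s ^ 2 / 4) := by rw [hsqrt]; ring

end PointwiseBounds

theorem profileODE_energy_bounds_general (c₀ α : ℝ) (hc₀ : 0 < c₀)
    (f f' : ℝ → ℂ) (h : ProfileODE c₀ α f f') :
    ∃ E₀ : ℝ,
      (∀ s : ℝ,
        (1 / 2) * (Real.exp (α * s ^ 2 / 2) * ‖f' s‖ ^ 2
          + (c₀ ^ 2 / 4) * ‖f s‖ ^ 2) = E₀) ∧
      ∀ s : ℝ,
        ‖f s‖ ≤ Real.sqrt (8 * E₀) / c₀ ∧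
        ‖f' s‖ ≤ Real.sqrt (2 * E₀) * Real.exp (-α * s ^ 2 / 4) ∧
        |‖f s‖ ^ 2| ≤ 8 * E₀ / c₀ ^ 2 ∧
        |((starRingEnd ℂ) (f s) * f' s).im| + |((starRingEnd ℂ) (f s) * f' s).re|
          ≤ (8 * E₀ / c₀) * Real.exp (-α * s ^ 2 / 4) := by
  have hE (s : ℝ) : profileEnergy c₀ α f f' s = profileEnergy c₀ α f f' 0 :=
    h.profileEnergy_eq s 0
  refine ⟨profileEnergy c₀ α f f' 0, hE, fun s => ?_⟩
  exact ⟨norm_le_of_profileEnergy_eq hc₀ (hE s), norm_deriv_le_of_profileEnergy_eq (hE s),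
    (abs_of_nonneg (by positivity)).trans_le (sq_norm_le_of_profileEnergy_eq hc₀ (hE s)),
    abs_im_add_abs_re_conj_mul_le_of_profileEnergy_eq hc₀ (hE s)⟩

/-- Conservation of energy for the profile ODE, and the
resulting uniform bounds on `f`, `f'`, `z = |f|²`, `y = Re(f̄ f')`,
`h = Im(f̄ f')`. -/
theorem profileODE_energy_bounds (c₀ α : ℝ) (hc₀ : 0 < c₀)
    (hα : α ∈ Set.Icc (0 : ℝ) 1)
    (f f' : ℝ → ℂ) (h : ProfileODE c₀ α f f') :
    ∃ E₀ : ℝ,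
      (∀ s : ℝ,
        (1 / 2) * (Real.exp (α * s ^ 2 / 2) * ‖f' s‖ ^ 2
          + (c₀ ^ 2 / 4) * ‖f s‖ ^ 2) = E₀) ∧
      ∀ s : ℝ,
        ‖f s‖ ≤ Real.sqrt (8 * E₀) / c₀ ∧
        ‖f' s‖ ≤ Real.sqrt (2 * E₀) * Real.exp (-α * s ^ 2 / 4) ∧
        |‖f s‖ ^ 2| ≤ 8 * E₀ / c₀ ^ 2 ∧
        |((starRingEnd ℂ) (f s) * f' s).im| + |((starRingEnd ℂ) (f s) * f' s).re|
          ≤ (8 * E₀ / c₀) * Real.exp (-α * s ^ 2 / 4) :=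
  profileODE_energy_bounds_general c₀ α hc₀ f f' h
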